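/- arXiv:2502.04591 — 4 statements merged into one kernel-verified Lean document; each statement's English description precedes it below -/
import Mathlib

section
/- Let σ: ℝ^N → ℝ^N be 1-Lipschitz, and suppose u is a unit eigenvector of the matrix A (A u = λ u) and an eigenvector of σ (for every t ≠ 0 there is μ_t with σ(t u) = μ_t u). Let P = u uᵀ. Then for any X ∈ ℝ^{N×d} and W ∈ ℝ^{d×d}, ‖(I−P) σ(A X W)‖_F ≤ ‖(I−P) A X W‖_F, where σ is applied so that each column of the argument is mapped by σ. -/
open scoped BigOperators

noncomputable def vecNorm {n : ℕ} (v : Fin n → ℝ) : ℝ := Real.sqrt (∑ i, v i ^ 2)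

noncomputable def frobNorm {N d : ℕ} (X : Matrix (Fin N) (Fin d) ℝ) : ℝ :=
  Real.sqrt (∑ i, ∑ j, X i j ^ 2)

noncomputable def specNorm {N d : ℕ} (X : Matrix (Fin N) (Fin d) ℝ) : ℝ :=
  sSup {c : ℝ | ∃ v : Fin d → ℝ, vecNorm v ≤ 1 ∧ c = vecNorm (X.mulVec v)}

noncomputable def numRank {N d : ℕ} (X : Matrix (Fin N) (Fin d) ℝ) : ℝ :=
  frobNorm X ^ 2 / specNorm X ^ 2

def frobInner {N d : ℕ} (A B : Matrix (Fin N) (Fin d) ℝ) : ℝ := ∑ i, ∑ j, A i j * B i j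

/-- Hilbert projective distance on the open positive cone. -/
noncomputable def dH {n : ℕ} (x y : Fin n → ℝ) : ℝ :=
  Real.log ((⨆ i, x i / y i) / (⨅ i, x i / y i))

/-- Apply a map `σ : ℝ^N → ℝ^N` to each column of a matrix. -/
def colApply {N d : ℕ} (σ : (Fin N → ℝ) → (Fin N → ℝ)) (M : Matrix (Fin N) (Fin d) ℝ) :
    Matrix (Fin N) (Fin d) ℝ := Matrix.of fun i j => σ (fun k => M k j) i

lemma expand_sq {n : ℕ} (u v : Fin n → ℝ) (s : ℝ) :
    ∑ i, (v i - s * u i) ^ 2 =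
      (∑ i, v i ^ 2) - 2 * s * (∑ i, u i * v i) + s ^ 2 * ∑ i, u i ^ 2 := by
  calc ∑ i, (v i - s * u i) ^ 2
      = ∑ i, (v i ^ 2 - 2 * s * (u i * v i) + s ^ 2 * u i ^ 2) :=
        Finset.sum_congr rfl fun i _ => by ring
    _ = _ := by
        rw [Finset.sum_add_distrib, Finset.sum_sub_distrib, ← Finset.mul_sum, ← Finset.mul_sum]

lemma key {N : ℕ} (σ : (Fin N → ℝ) → (Fin N → ℝ))
    (hlip : ∀ x y : Fin N → ℝ, vecNorm (σ x - σ y) ≤ vecNorm (x - y))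
    (u : Fin N → ℝ) (hu : ∑ i, u i ^ 2 = 1)
    (hσu : ∀ t : ℝ, t ≠ 0 → ∃ μ : ℝ, σ (t • u) = μ • u)
    (y : Fin N → ℝ) :
    ∑ i, (σ y i - (∑ k, u k * σ y k) * u i) ^ 2 ≤
      ∑ i, (y i - (∑ k, u k * y k) * u i) ^ 2 := by
  set c : ℝ := ∑ k, u k * y k with hc
  set c' : ℝ := ∑ k, u k * σ y k with hc'
  -- For every t ≠ 0 the LHS is bounded by ∑ y² - 2 t c + t².
  have main : ∀ t : ℝ, t ≠ 0 →
      ∑ i, (σ y i - c' * u i) ^ 2 ≤ (∑ i, y i ^ 2) - 2 * t * c + t ^ 2 := by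
    intro t ht
    obtain ⟨μ, hμ⟩ := hσu t ht
    have h1 : ∑ i, (σ y i - c' * u i) ^ 2 ≤ ∑ i, (σ y i - μ * u i) ^ 2 := by
      rw [expand_sq, expand_sq, hu, ← hc']
      nlinarith [sq_nonneg (μ - c')]
    have h2 : ∑ i, (σ y i - μ * u i) ^ 2 ≤ ∑ i, (y i - t * u i) ^ 2 := by
      have hl := hlip y (t • u)
      rw [hμ] at hl
      have e1 : vecNorm (σ y - μ • u) = Real.sqrt (∑ i, (σ y i - μ * u i) ^ 2) := rfl
      have e2 : vecNorm (y - t • u) = Real.sqrt (∑ i, (y i - t * u i) ^ 2) := rfl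
      rw [e1, e2] at hl
      have h0 : (0:ℝ) ≤ ∑ i, (σ y i - μ * u i) ^ 2 :=
        Finset.sum_nonneg fun i _ => sq_nonneg _
      calc ∑ i, (σ y i - μ * u i) ^ 2
          = Real.sqrt (∑ i, (σ y i - μ * u i) ^ 2) ^ 2 := (Real.sq_sqrt h0).symm
        _ ≤ Real.sqrt (∑ i, (y i - t * u i) ^ 2) ^ 2 := by
            apply pow_le_pow_left₀ (Real.sqrt_nonneg _) hl
        _ = ∑ i, (y i - t * u i) ^ 2 :=
            Real.sq_sqrt (Finset.sum_nonneg fun i _ => sq_nonneg _)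
    have h3 : ∑ i, (y i - t * u i) ^ 2 = (∑ i, y i ^ 2) - 2 * t * c + t ^ 2 := by
      rw [expand_sq, hu, ← hc]; ring
    linarith
  have hRHS : ∑ i, (y i - c * u i) ^ 2 = (∑ i, y i ^ 2) - c ^ 2 := by
    rw [expand_sq, hu, ← hc]; ring
  rw [hRHS]
  by_cases h : c = 0
  · rw [h]
    have : ∀ ε > (0:ℝ), ∑ i, (σ y i - c' * u i) ^ 2 ≤ (∑ i, y i ^ 2) - (0:ℝ)^2 + ε := by
      intro ε hε
      have hm := main (Real.sqrt ε) (by positivity)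
      rw [Real.sq_sqrt hε.le] at hm
      have h2 : 2 * Real.sqrt ε * c = 0 := by rw [h]; ring
      nlinarith
    exact le_of_forall_pos_le_add this
  · have := main c h
    nlinarith

lemma entry_eq {N d : ℕ} (u : Fin N → ℝ) (M : Matrix (Fin N) (Fin d) ℝ) (i : Fin N)
    (j : Fin d) :
    (((1 - Matrix.vecMulVec u u) : Matrix (Fin N) (Fin N) ℝ) * M) i j
      = M i j - (∑ k, u k * M k j) * u i := by
  rw [Matrix.sub_mul, Matrix.one_mul, Matrix.sub_apply, Matrix.mul_apply]
  simp only [Matrix.vecMulVec_apply, Finset.sum_mul]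
  congr 1
  exact Finset.sum_congr rfl fun k _ => by ring

/-- One-layer bound: `‖(I-P) σ(A X W)‖_F ≤ ‖(I-P) A X W‖_F` for 1-Lipschitz `σ` applied
columnwise, when `u` is a common unit eigenvector of `A` and of `σ`. -/
theorem stmt6 {N d : ℕ} (σ : (Fin N → ℝ) → (Fin N → ℝ))
    (hlip : ∀ x y : Fin N → ℝ, vecNorm (σ x - σ y) ≤ vecNorm (x - y))
    (A : Matrix (Fin N) (Fin N) ℝ) (u : Fin N → ℝ) (lam : ℝ)
    (hu : vecNorm u = 1) (heig : A.mulVec u = lam • u)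
    (hσu : ∀ t : ℝ, t ≠ 0 → ∃ μ : ℝ, σ (t • u) = μ • u)
    (X : Matrix (Fin N) (Fin d) ℝ) (W : Matrix (Fin d) (Fin d) ℝ) :
    frobNorm ((1 - Matrix.vecMulVec u u) * colApply σ (A * X * W)) ≤
      frobNorm ((1 - Matrix.vecMulVec u u) * (A * X * W)) := by
  set M : Matrix (Fin N) (Fin d) ℝ := A * X * W with hM
  set Q : Matrix (Fin N) (Fin N) ℝ := 1 - Matrix.vecMulVec u u with hQ
  have entry' : ∀ (e : ℕ) (M' : Matrix (Fin N) (Fin (e : ℕ)) ℝ) (i : Fin N) (j : Fin e),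
      (Q * M') i j = M' i j - (∑ k, u k * M' k j) * u i := by
    intro e M' i j; rw [hQ]; exact entry_eq u M' i j
  have hu2 : ∑ i, u i ^ 2 = 1 := by
    have h0 : (0:ℝ) ≤ ∑ i, u i ^ 2 := Finset.sum_nonneg fun i _ => sq_nonneg _
    have : Real.sqrt (∑ i, u i ^ 2) = 1 := hu
    nlinarith [Real.sq_sqrt h0]
  unfold frobNorm
  apply Real.sqrt_le_sqrt
  conv_lhs => rw [Finset.sum_comm]
  conv_rhs => rw [Finset.sum_comm]
  apply Finset.sum_le_sum
  intro j _
  have hcol := key σ hlip u hu2 hσu (fun k => M k j)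
  have e1 : ∀ i, (Q * colApply σ M) i j
      = σ (fun k => M k j) i - (∑ k, u k * σ (fun k => M k j) k) * u i := by
    intro i
    rw [entry' d]
    simp [colApply]
  have e2 : ∀ i, (Q * M) i j
      = (fun k => M k j) i - (∑ k, u k * (fun k => M k j) k) * u i := fun i => entry' d M i j
  calc ∑ i, (Q * colApply σ M) i j ^ 2
      = ∑ i, (σ (fun k => M k j) i - (∑ k, u k * σ (fun k => M k j) k) * u i) ^ 2 := by
        exact Finset.sum_congr rfl fun i _ => by rw [e1]
    _ ≤ ∑ i, ((fun k => M k j) i - (∑ k, u k * (fun k => M k j) k) * u i) ^ 2 := hcol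
    _ = ∑ i, (Q * M) i j ^ 2 :=
        Finset.sum_congr rfl fun i _ => by rw [e2]
end

section
/- Let X^{(l)} be defined by X^{(l+1)} = σ(A^{(l)} X^{(l)} W^{(l)}) where σ is 1-Lipschitz, u is a unit vector with A^{(l)} u = λ_l u for every l, u is an eigenvector of σ, and P = u uᵀ. If ∏_{l=0}^{L-1} ‖(I−P)A^{(l)}‖₂ ‖W^{(l)}‖₂ → 0 as L → ∞, then ‖X^{(L)} − P X^{(L)}‖_F² → 0 as L → ∞. -/
open scoped BigOperators

/-!
Write `Q = 1 - u uᵀ`. Since `u` is a common eigenvector of the `A⁽ˡ⁾`, `Q A Q = Q A`, so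
`Q (A X W) = (Q A) (Q X) W`. Since `σ` maps the line through `u` into itself (at `0` by continuity),
`Q σ(m) = Q (σ(m) - σ(t u))` for `t = ⟪u, m⟫`, whence `‖Q σ(m)‖ ≤ ‖m - t u‖ = ‖Q m‖` column by
column. Hence `‖Q X⁽ˡ⁺¹⁾‖_F ≤ ‖Q A⁽ˡ⁾‖₂ ‖W⁽ˡ⁾‖₂ ‖Q X⁽ˡ⁾‖_F`, and iterating bounds `‖Q X⁽ᴸ⁾‖_F` by
the product in the hypothesis times `‖Q X⁽⁰⁾‖_F`.
-/

open Matrix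

section Norms
open scoped Matrix.Norms.L2Operator
variable {m n : ℕ}

lemma vecNorm_eq_norm_toLp (v : Fin n → ℝ) : vecNorm v = ‖WithLp.toLp 2 v‖ := by
  simp [vecNorm, EuclideanSpace.norm_eq]

lemma vecNorm_nonneg (v : Fin n → ℝ) : 0 ≤ vecNorm v := Real.sqrt_nonneg _

lemma vecNorm_sq (v : Fin n → ℝ) : vecNorm v ^ 2 = v ⬝ᵥ v := by
  rw [vecNorm, Real.sq_sqrt (by positivity)]
  simp [dotProduct, sq]

lemma specNorm_eq_l2_opNorm (M : Matrix (Fin m) (Fin n) ℝ) : specNorm M = ‖M‖ := by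
  rw [l2_opNorm_def, ← ContinuousLinearMap.sSup_unitClosedBall_eq_norm, specNorm]
  congr 1
  ext c
  simp only [Set.mem_ofPred_eq, Set.mem_image, Metric.mem_closedBall, dist_zero_right,
    vecNorm_eq_norm_toLp, eq_comm (a := c)]
  exact ⟨fun ⟨v, hv, hc⟩ => ⟨WithLp.toLp 2 v, hv, hc⟩, fun ⟨x, hx, hc⟩ => ⟨x.ofLp, hx, hc⟩⟩

lemma vecNorm_mulVec_le (M : Matrix (Fin m) (Fin n) ℝ) (v : Fin n → ℝ) :
    vecNorm (M *ᵥ v) ≤ specNorm M * vecNorm v := by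
  simpa [specNorm_eq_l2_opNorm, vecNorm_eq_norm_toLp] using M.l2_opNorm_mulVec (WithLp.toLp 2 v)

lemma specNorm_nonneg (M : Matrix (Fin m) (Fin n) ℝ) : 0 ≤ specNorm M :=
  (specNorm_eq_l2_opNorm M).symm ▸ norm_nonneg M

lemma specNorm_transpose (M : Matrix (Fin m) (Fin n) ℝ) : specNorm Mᵀ = specNorm M := by
  simp only [specNorm_eq_l2_opNorm, ← conjTranspose_eq_transpose_of_trivial,
    l2_opNorm_conjTranspose]

end Norms

lemma Matrix.transpose_mul_apply {l m n α : Type*} [Fintype m] [NonUnitalNonAssocSemiring α]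
    (M : Matrix l m α) (Y : Matrix m n α) (j : n) : (M * Y)ᵀ j = M *ᵥ Yᵀ j :=
  rfl

section Frobenius
variable {m n k : ℕ}

lemma frobNorm_eq_sqrt_sum_vecNorm_sq (X : Matrix (Fin m) (Fin n) ℝ) :
    frobNorm X = √(∑ j, vecNorm (Xᵀ j) ^ 2) := by
  rw [frobNorm, Finset.sum_comm]
  congr! with j
  rw [vecNorm, Real.sq_sqrt (by positivity)]
  rfl

lemma frobNorm_nonneg (X : Matrix (Fin m) (Fin n) ℝ) : 0 ≤ frobNorm X := Real.sqrt_nonneg _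

lemma frobNorm_transpose (X : Matrix (Fin m) (Fin n) ℝ) : frobNorm Xᵀ = frobNorm X := by
  rw [frobNorm, frobNorm, Finset.sum_comm]
  rfl

lemma frobNorm_le_mul_of_forall_col_le {X : Matrix (Fin m) (Fin k) ℝ}
    {Y : Matrix (Fin n) (Fin k) ℝ} {c : ℝ} (hc : 0 ≤ c)
    (h : ∀ j, vecNorm (Xᵀ j) ≤ c * vecNorm (Yᵀ j)) : frobNorm X ≤ c * frobNorm Y := by
  rw [frobNorm_eq_sqrt_sum_vecNorm_sq, frobNorm_eq_sqrt_sum_vecNorm_sq, ← Real.sqrt_sq hc,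
    ← Real.sqrt_mul (sq_nonneg c), Finset.mul_sum]
  gcongr with j
  rw [← mul_pow]
  exact pow_le_pow_left₀ (vecNorm_nonneg _) (h j) 2

lemma frobNorm_mul_le_specNorm_mul (M : Matrix (Fin m) (Fin n) ℝ) (Y : Matrix (Fin n) (Fin k) ℝ) :
    frobNorm (M * Y) ≤ specNorm M * frobNorm Y :=
  frobNorm_le_mul_of_forall_col_le (specNorm_nonneg M) fun j =>
    (transpose_mul_apply M Y j).symm ▸ vecNorm_mulVec_le M (Yᵀ j)

lemma frobNorm_mul_le_mul_specNorm (Y : Matrix (Fin m) (Fin n) ℝ) (M : Matrix (Fin n) (Fin k) ℝ) :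
    frobNorm (Y * M) ≤ frobNorm Y * specNorm M := by
  rw [← frobNorm_transpose, transpose_mul, mul_comm, ← specNorm_transpose, ← frobNorm_transpose Y]
  exact frobNorm_mul_le_specNorm_mul Mᵀ Yᵀ

lemma frobNorm_mul_mul_le (M : Matrix (Fin m) (Fin n) ℝ) (Y : Matrix (Fin n) (Fin k) ℝ)
    (W : Matrix (Fin k) (Fin k) ℝ) :
    frobNorm (M * Y * W) ≤ specNorm M * frobNorm Y * specNorm W := by
  rw [Matrix.mul_assoc, mul_assoc]
  exact (frobNorm_mul_le_specNorm_mul _ _).trans <|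
    mul_le_mul_of_nonneg_left (frobNorm_mul_le_mul_specNorm _ _) (specNorm_nonneg M)

end Frobenius

section Projection
variable {n : ℕ} {u : Fin n → ℝ}

lemma one_sub_vecMulVec_mulVec (u w : Fin n → ℝ) :
    (1 - vecMulVec u u) *ᵥ w = w - (u ⬝ᵥ w) • u := by
  rw [sub_mulVec, one_mulVec, vecMulVec_mulVec, op_smul_eq_smul]

lemma one_sub_vecMulVec_mulVec_smul_self (hu : u ⬝ᵥ u = 1) (t : ℝ) :
    (1 - vecMulVec u u) *ᵥ (t • u) = 0 := by
  rw [one_sub_vecMulVec_mulVec, dotProduct_smul, hu, smul_eq_mul, mul_one, sub_self]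

lemma vecNorm_one_sub_vecMulVec_mulVec_le (hu : u ⬝ᵥ u = 1) (w : Fin n → ℝ) :
    vecNorm ((1 - vecMulVec u u) *ᵥ w) ≤ vecNorm w := by
  refine pow_le_pow_iff_left₀ (vecNorm_nonneg _) (vecNorm_nonneg _) two_ne_zero |>.mp ?_
  rw [vecNorm_sq, vecNorm_sq, one_sub_vecMulVec_mulVec]
  have hw : (w - (u ⬝ᵥ w) • u) ⬝ᵥ (w - (u ⬝ᵥ w) • u) = w ⬝ᵥ w - (u ⬝ᵥ w) ^ 2 := by
    simp only [sub_dotProduct, dotProduct_sub, smul_dotProduct, dotProduct_smul, hu,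
      dotProduct_comm w u, smul_eq_mul]
    ring
  rw [hw]
  nlinarith [sq_nonneg (u ⬝ᵥ w)]

lemma one_sub_vecMulVec_mul_vecMulVec (hu : u ⬝ᵥ u = 1) :
    (1 - vecMulVec u u) * vecMulVec u u = 0 := by
  rw [Matrix.sub_mul, Matrix.one_mul, vecMulVec_mul_vecMulVec, hu, one_smul, sub_self]

lemma one_sub_vecMulVec_mul_mul_one_sub_vecMulVec (hu : u ⬝ᵥ u = 1)
    {A : Matrix (Fin n) (Fin n) ℝ} {c : ℝ} (hA : A *ᵥ u = c • u) :
    (1 - vecMulVec u u) * A * (1 - vecMulVec u u) = (1 - vecMulVec u u) * A := by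
  rw [Matrix.mul_sub, Matrix.mul_one, Matrix.mul_assoc, mul_vecMulVec, hA, smul_vecMulVec,
    Matrix.mul_smul, one_sub_vecMulVec_mul_vecMulVec hu, smul_zero, sub_zero]

end Projection

section Activation
variable {n : ℕ} {σ : (Fin n → ℝ) → (Fin n → ℝ)} {u : Fin n → ℝ}

lemma continuous_of_vecNorm_sub_le (hσ : ∀ x y, vecNorm (σ x - σ y) ≤ vecNorm (x - y)) :
    Continuous σ := by
  have hE : LipschitzWith 1 (fun x : EuclideanSpace ℝ (Fin n) => WithLp.toLp 2 (σ x.ofLp)) :=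
    LipschitzWith.of_dist_le_mul fun x y => by
      simpa [dist_eq_norm, vecNorm_eq_norm_toLp] using hσ x.ofLp y.ofLp
  exact (PiLp.continuous_ofLp 2 _).comp (hE.continuous.comp (PiLp.continuous_toLp 2 _))

lemma one_sub_vecMulVec_mulVec_apply_smul_self (hu : u ⬝ᵥ u = 1) (hσ : Continuous σ)
    (hσu : ∀ t : ℝ, t ≠ 0 → ∃ μ : ℝ, σ (t • u) = μ • u) (t : ℝ) :
    (1 - vecMulVec u u) *ᵥ σ (t • u) = 0 := by
  have hne : Set.EqOn (fun t : ℝ => (1 - vecMulVec u u) *ᵥ σ (t • u)) 0 {0}ᶜ := fun t ht => by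
    obtain ⟨μ, hμ⟩ := hσu t ht
    simp only [hμ, one_sub_vecMulVec_mulVec_smul_self hu, Pi.zero_apply]
  have hcont : Continuous fun t : ℝ => (1 - vecMulVec u u) *ᵥ σ (t • u) := by fun_prop
  exact congrFun (Continuous.ext_on (dense_compl_singleton (0 : ℝ)) hcont continuous_const hne) t

lemma vecNorm_one_sub_vecMulVec_mulVec_apply_le
    (hlip : ∀ x y, vecNorm (σ x - σ y) ≤ vecNorm (x - y)) (hu : u ⬝ᵥ u = 1)
    (hσu : ∀ t : ℝ, t ≠ 0 → ∃ μ : ℝ, σ (t • u) = μ • u) (w : Fin n → ℝ) :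
    vecNorm ((1 - vecMulVec u u) *ᵥ σ w) ≤ vecNorm ((1 - vecMulVec u u) *ᵥ w) := by
  have hσ0 := one_sub_vecMulVec_mulVec_apply_smul_self hu (continuous_of_vecNorm_sub_le hlip) hσu
  calc vecNorm ((1 - vecMulVec u u) *ᵥ σ w)
      = vecNorm ((1 - vecMulVec u u) *ᵥ (σ w - σ ((u ⬝ᵥ w) • u))) := by
        rw [mulVec_sub, hσ0, sub_zero]
    _ ≤ vecNorm (σ w - σ ((u ⬝ᵥ w) • u)) := vecNorm_one_sub_vecMulVec_mulVec_le hu _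
    _ ≤ vecNorm (w - (u ⬝ᵥ w) • u) := hlip _ _
    _ = vecNorm ((1 - vecMulVec u u) *ᵥ w) := by rw [one_sub_vecMulVec_mulVec]

lemma frobNorm_one_sub_vecMulVec_mul_colApply_le
    (hlip : ∀ x y, vecNorm (σ x - σ y) ≤ vecNorm (x - y)) (hu : u ⬝ᵥ u = 1)
    (hσu : ∀ t : ℝ, t ≠ 0 → ∃ μ : ℝ, σ (t • u) = μ • u) {d : ℕ} (M : Matrix (Fin n) (Fin d) ℝ) :
    frobNorm ((1 - vecMulVec u u) * colApply σ M) ≤ frobNorm ((1 - vecMulVec u u) * M) := by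
  rw [← one_mul (frobNorm (_ * M))]
  refine frobNorm_le_mul_of_forall_col_le zero_le_one fun j => ?_
  rw [transpose_mul_apply, transpose_mul_apply, one_mul]
  exact vecNorm_one_sub_vecMulVec_mulVec_apply_le hlip hu hσu (Mᵀ j)

end Activation

lemma le_prod_range_mul_of_le_mul {R : Type*} [CommSemiring R] [PartialOrder R] [IsOrderedRing R]
    {a c : ℕ → R} (hc : ∀ l, 0 ≤ c l) (h : ∀ l, a (l + 1) ≤ c l * a l) (L : ℕ) :
    a L ≤ (∏ l ∈ Finset.range L, c l) * a 0 := by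
  induction L with
  | zero => simp
  | succ L ih =>
    calc a (L + 1) ≤ c L * a L := h L
      _ ≤ c L * ((∏ l ∈ Finset.range L, c l) * a 0) := mul_le_mul_of_nonneg_left ih (hc L)
      _ = (∏ l ∈ Finset.range (L + 1), c l) * a 0 := by rw [Finset.prod_range_succ]; ring

lemma frobNorm_one_sub_vecMulVec_mul_layer_le {N d : ℕ} {σ : (Fin N → ℝ) → (Fin N → ℝ)}
    {u : Fin N → ℝ} (hlip : ∀ x y, vecNorm (σ x - σ y) ≤ vecNorm (x - y)) (hu : u ⬝ᵥ u = 1)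
    (hσu : ∀ t : ℝ, t ≠ 0 → ∃ μ : ℝ, σ (t • u) = μ • u)
    {A : Matrix (Fin N) (Fin N) ℝ} {c : ℝ} (hA : A *ᵥ u = c • u)
    (X : Matrix (Fin N) (Fin d) ℝ) (W : Matrix (Fin d) (Fin d) ℝ) :
    frobNorm ((1 - vecMulVec u u) * colApply σ (A * X * W))
      ≤ specNorm ((1 - vecMulVec u u) * A) * specNorm W * frobNorm ((1 - vecMulVec u u) * X) := by
  calc frobNorm ((1 - vecMulVec u u) * colApply σ (A * X * W))
      ≤ frobNorm ((1 - vecMulVec u u) * (A * X * W)) :=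
        frobNorm_one_sub_vecMulVec_mul_colApply_le hlip hu hσu _
    _ = frobNorm ((1 - vecMulVec u u) * A * ((1 - vecMulVec u u) * X) * W) := by
        rw [← Matrix.mul_assoc _ _ X, one_sub_vecMulVec_mul_mul_one_sub_vecMulVec hu hA]
        simp only [Matrix.mul_assoc]
    _ ≤ _ := (frobNorm_mul_mul_le _ _ _).trans_eq (by ring)

/-- If `∏_{l<L} ‖(I-P)A^{(l)}‖₂ ‖W^{(l)}‖₂ → 0`, then `E_Proj(X^{(L)}) = ‖X^{(L)} - P X^{(L)}‖_F² → 0`. -/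
theorem stmt7 {N d : ℕ} (σ : (Fin N → ℝ) → (Fin N → ℝ))
    (hlip : ∀ x y : Fin N → ℝ, vecNorm (σ x - σ y) ≤ vecNorm (x - y))
    (u : Fin N → ℝ) (hu : vecNorm u = 1)
    (A : ℕ → Matrix (Fin N) (Fin N) ℝ) (W : ℕ → Matrix (Fin d) (Fin d) ℝ)
    (lam : ℕ → ℝ) (heig : ∀ l, (A l).mulVec u = lam l • u)
    (hσu : ∀ t : ℝ, t ≠ 0 → ∃ μ : ℝ, σ (t • u) = μ • u)
    (X : ℕ → Matrix (Fin N) (Fin d) ℝ)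
    (hrec : ∀ l, X (l + 1) = colApply σ (A l * X l * W l))
    (hprod : Filter.Tendsto
      (fun L => ∏ l ∈ Finset.range L,
        specNorm ((1 - Matrix.vecMulVec u u) * A l) * specNorm (W l))
      Filter.atTop (nhds 0)) :
    Filter.Tendsto (fun L => frobNorm (X L - Matrix.vecMulVec u u * X L) ^ 2)
      Filter.atTop (nhds 0) := by
  have hu' : u ⬝ᵥ u = 1 := by rw [← vecNorm_sq, hu, one_pow]
  have hbound := le_prod_range_mul_of_le_mul
    (a := fun L => frobNorm ((1 - vecMulVec u u) * X L))
    (fun l => mul_nonneg (specNorm_nonneg _) (specNorm_nonneg _))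
    (fun l => (hrec l).symm ▸ frobNorm_one_sub_vecMulVec_mul_layer_le hlip hu' hσu (heig l) _ _)
  have hlim := (hprod.mul_const (frobNorm ((1 - vecMulVec u u) * X 0))).pow 2
  rw [zero_mul, zero_pow two_ne_zero] at hlim
  refine squeeze_zero (fun L => sq_nonneg _) (fun L => ?_) hlim
  rw [show X L - vecMulVec u u * X L = (1 - vecMulVec u u) * X L by
    rw [Matrix.sub_mul, Matrix.one_mul]]
  exact pow_le_pow_left₀ (frobNorm_nonneg _) (hbound L) 2
end

section
/- Let A = [[0, 1], [1/2, 1/2]] (a row-stochastic 2×2 matrix) with dominant eigenvector u = (1,1). Then for every C > 0 there exists β_C < 1 such that for all x ∈ ℝ_{>0}² with d_H(x, u) ≤ C, one has d_H(A x, u) ≤ β_C · d_H(x, u), i.e. A is contractive with respect to u on Hilbert-distance balls around u, even though A is not entrywise strictly positive. -/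
open scoped BigOperators

open Real

/-!
On the cone `x₁, x₂ > 0`, `d_H(x, u) = log t` with `t = max xᵢ / min xᵢ`, and one step of `A`
sends `t` to at most `(1 + t) / 2` (with equality when `x₁ ≥ x₂`). So
`d_H(A x, u) ≤ g (d_H(x, u))` for `g s = log ((1 + eˢ) / 2)`. Concavity of `y ↦ y ^ λ` on
`[0, ∞)` gives `(1 + T ^ λ) / 2 ≤ ((1 + T) / 2) ^ λ`; with `T = e^C`, `λ = s / C` this says
`g s ≤ (s / C) g C` on `[0, C]`, and `β_C = g C / C < 1` because `(1 + e^C) / 2 < e^C`.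
-/

lemma ciSup_fin_two {α : Type*} [ConditionallyCompleteLattice α] (f : Fin 2 → α) :
    ⨆ i, f i = f 0 ⊔ f 1 := by
  rw [iSup, ← csSup_pair]
  congr 1
  ext
  simp [Fin.exists_fin_two, eq_comm]

lemma ciInf_fin_two {α : Type*} [ConditionallyCompleteLattice α] (f : Fin 2 → α) :
    ⨅ i, f i = f 0 ⊓ f 1 := by
  rw [iInf, ← csInf_pair]
  congr 1
  ext
  simp [Fin.exists_fin_two, eq_comm]

lemma dH_one_fin_two (x : Fin 2 → ℝ) :
    dH x (fun _ => 1) = log (max (x 0) (x 1) / min (x 0) (x 1)) := by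
  simp only [dH, div_one, ciSup_fin_two, ciInf_fin_two]

lemma one_le_max_div_min {a b : ℝ} (ha : 0 < a) (hb : 0 < b) : 1 ≤ max a b / min a b :=
  (one_le_div (lt_min ha hb)).2 min_le_max

lemma mulVec_zero_one_half_half (x : Fin 2 → ℝ) :
    (!![0, 1; 1/2, 1/2] : Matrix (Fin 2) (Fin 2) ℝ).mulVec x = ![x 1, (x 0 + x 1) / 2] := by
  ext i
  fin_cases i <;> simp [Matrix.mulVec, dotProduct, Fin.sum_univ_two]
  ring

lemma max_div_min_average_le {a b : ℝ} (ha : 0 < a) (hb : 0 < b) :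
    max b ((a + b) / 2) / min b ((a + b) / 2) ≤ (1 + max a b / min a b) / 2 := by
  rcases le_total a b with hab | hba
  · rw [max_eq_left (by linarith), min_eq_right (by linarith), max_eq_right hab,
      min_eq_left hab, div_le_iff₀ (by positivity)]
    field_simp
    nlinarith [sq_nonneg (a - b)]
  · rw [max_eq_right (by linarith), min_eq_left (by linarith), max_eq_left hba,
      min_eq_right hba]
    field_simp
    linarith

lemma one_add_rpow_div_two_le {T l : ℝ} (hT : 0 ≤ T) (hl₀ : 0 ≤ l) (hl₁ : l ≤ 1) :
    (1 + T ^ l) / 2 ≤ ((1 + T) / 2) ^ l := by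
  have := (concaveOn_rpow hl₀ hl₁).2 (Set.mem_Ici.2 zero_le_one) (Set.mem_Ici.2 hT)
    (show (0 : ℝ) ≤ 1 / 2 by norm_num) (show (0 : ℝ) ≤ 1 / 2 by norm_num) (by norm_num)
  simp only [smul_eq_mul, one_rpow] at this
  rw [show (1 + T) / 2 = 1 / 2 * 1 + 1 / 2 * T by ring]
  linarith

lemma log_one_add_exp_div_two_le {C s : ℝ} (hC : 0 < C) (hs₀ : 0 ≤ s) (hsC : s ≤ C) :
    log ((1 + exp s) / 2) ≤ s / C * log ((1 + exp C) / 2) := by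
  have hexp : exp s = exp C ^ (s / C) := by rw [← exp_mul, mul_div_cancel₀ _ hC.ne']
  rw [← log_rpow (by positivity), hexp]
  exact log_le_log (by positivity)
    (one_add_rpow_div_two_le (exp_pos C).le (div_nonneg hs₀ hC.le) ((div_le_one hC).2 hsC))

lemma log_one_add_exp_div_two_lt {C : ℝ} (hC : 0 < C) : log ((1 + exp C) / 2) < C := by
  rw [log_lt_iff_lt_exp (by positivity)]
  linarith [one_lt_exp_iff.2 hC]

/-- The row-stochastic matrix `A = [[0,1],[1/2,1/2]]` is not entrywise positive, yet it is
contractive in the Hilbert distance towards its dominant eigenvector `u = (1,1)` on every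
Hilbert-distance ball around `u`. -/
theorem stmt13 :
    (¬ ∀ i j : Fin 2, 0 < (!![0, 1; 1/2, 1/2] : Matrix (Fin 2) (Fin 2) ℝ) i j) ∧
    (∀ C : ℝ, 0 < C → ∃ β : ℝ, β < 1 ∧
      ∀ x : Fin 2 → ℝ, (∀ i, 0 < x i) → dH x (fun _ => 1) ≤ C →
        dH ((!![0, 1; 1/2, 1/2] : Matrix (Fin 2) (Fin 2) ℝ).mulVec x) (fun _ => 1) ≤
          β * dH x (fun _ => 1)) := by
  refine ⟨fun h => by simpa using h 0 0, fun C hC => ?_⟩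
  refine ⟨log ((1 + exp C) / 2) / C, (div_lt_one hC).2 (log_one_add_exp_div_two_lt hC),
    fun x hx hxC => ?_⟩
  rw [dH_one_fin_two] at hxC
  rw [mulVec_zero_one_half_half, dH_one_fin_two, dH_one_fin_two]
  have hratio := one_le_max_div_min (hx 0) (hx 1)
  set d := log (max (x 0) (x 1) / min (x 0) (x 1))
  have hratioAx := one_le_max_div_min (hx 1) (by linarith [hx 0, hx 1] : 0 < (x 0 + x 1) / 2)
  calc _ ≤ log ((1 + exp d) / 2) := by
        rw [exp_log (by linarith)]
        exact log_le_log (zero_lt_one.trans_le hratioAx) (max_div_min_average_le (hx 0) (hx 1))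
    _ ≤ d / C * log ((1 + exp C) / 2) := log_one_add_exp_div_two_le hC (log_nonneg hratio) hxC
    _ = log ((1 + exp C) / 2) / C * d := by ring
end

section
/- Let A ∈ ℝ^{N×N} be nonnegative and irreducible with positive dominant eigenvector u (so A maps the open positive cone into itself), let X ∈ ℝ^{N×d} be entrywise strictly positive, and let W ∈ ℝ^{d×d} be nonnegative with min_j max_i W_{ij} > 0. Suppose A is contractive with respect to u: for C = max_i d_H(X_{:,i}, u) there is β_C < 1 with d_H(A x, u) ≤ β_C d_H(x, u) whenever d_H(x, u) ≤ C. Then max_i d_H((A X W)_{:,i}, u) ≤ β_C · max_i d_H(X_{:,i}, u). -/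
open scoped BigOperators

/-- rewrite dH via sup'/inf' -/
lemma dH_eq_sup' {n : ℕ} (hn : 0 < n) (x y : Fin n → ℝ) :
    dH x y = Real.log
      ((Finset.univ.sup' (Finset.univ_nonempty_iff.mpr (Fin.pos_iff_nonempty.mp hn))
          fun i => x i / y i) /
       (Finset.univ.inf' (Finset.univ_nonempty_iff.mpr (Fin.pos_iff_nonempty.mp hn))
          fun i => x i / y i)) := by
  haveI : Nonempty (Fin n) := Fin.pos_iff_nonempty.mp hn
  rw [dH, Finset.sup'_univ_eq_ciSup, Finset.inf'_univ_eq_ciInf]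

lemma dH_nonneg {n : ℕ} (hn : 0 < n) (x y : Fin n → ℝ) (hx : ∀ i, 0 < x i)
    (hy : ∀ i, 0 < y i) : 0 ≤ dH x y := by
  haveI : Nonempty (Fin n) := Fin.pos_iff_nonempty.mp hn
  rw [dH_eq_sup' hn]
  set ne := (Finset.univ_nonempty_iff.mpr (Fin.pos_iff_nonempty.mp hn))
  have hinf : 0 < Finset.univ.inf' ne fun i => x i / y i := by
    obtain ⟨i, _, hi⟩ := Finset.exists_mem_eq_inf' ne fun i => x i / y i
    rw [hi]; exact div_pos (hx i) (hy i)
  have hle : (Finset.univ.inf' ne fun i => x i / y i) ≤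
      Finset.univ.sup' ne fun i => x i / y i := by
    obtain ⟨i⟩ := (inferInstance : Nonempty (Fin n))
    exact le_trans (Finset.inf'_le (fun i => x i / y i) (Finset.mem_univ i)) (Finset.le_sup' (fun i => x i / y i) (Finset.mem_univ i))
  apply Real.log_nonneg
  rw [le_div_iff₀ hinf]; simpa using hle

/-- key: Hilbert distance of a positive combination -/
lemma dH_sum_le {N dd : ℕ} (hN : 0 < N) (hdd : 0 < dd)
    (u : Fin N → ℝ) (hu : ∀ i, 0 < u i)
    (v : Fin dd → Fin N → ℝ) (hv : ∀ i k, 0 < v i k)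
    (c : Fin dd → ℝ) (hc : ∀ i, 0 ≤ c i) (hc0 : ∃ i, 0 < c i)
    (D : ℝ) (hD : ∀ i, dH (v i) u ≤ D) :
    dH (fun k => ∑ i, c i * v i k) u ≤ D := by
  haveI : Nonempty (Fin N) := Fin.pos_iff_nonempty.mp hN
  set neN := (Finset.univ_nonempty_iff.mpr (Fin.pos_iff_nonempty.mp hN))
  set m : Fin dd → ℝ := fun i => Finset.univ.inf' neN fun k => v i k / u k with hm
  set M : Fin dd → ℝ := fun i => Finset.univ.sup' neN fun k => v i k / u k with hM
  have hmpos : ∀ i, 0 < m i := by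
    intro i
    obtain ⟨k, _, hk⟩ := Finset.exists_mem_eq_inf' neN fun k => v i k / u k
    rw [hm]; dsimp only; rw [hk]; exact div_pos (hv i k) (hu k)
  have hMm : ∀ i, M i ≤ Real.exp D * m i := by
    intro i
    have := hD i
    rw [dH_eq_sup' hN] at this
    have hMipos : 0 < M i := by
      obtain ⟨k, _, hk⟩ := Finset.exists_mem_eq_sup' neN fun k => v i k / u k
      rw [hM]; dsimp only; rw [hk]; exact div_pos (hv i k) (hu k)
    have h2 : M i / m i ≤ Real.exp D := by
      have := Real.exp_le_exp.mpr this
      rwa [Real.exp_log (div_pos hMipos (hmpos i))] at this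
    rw [div_le_iff₀ (hmpos i)] at h2
    linarith
  -- bounds on entries
  have hlow : ∀ k, (∑ i, c i * m i) ≤ (∑ i, c i * v i k) / u k := by
    intro k
    rw [Finset.sum_div]
    apply Finset.sum_le_sum
    intro i _
    rw [mul_div_assoc]
    exact mul_le_mul_of_nonneg_left (Finset.inf'_le _ (Finset.mem_univ k)) (hc i)
  have hhigh : ∀ k, (∑ i, c i * v i k) / u k ≤ ∑ i, c i * M i := by
    intro k
    rw [Finset.sum_div]
    apply Finset.sum_le_sum
    intro i _
    rw [mul_div_assoc]
    exact mul_le_mul_of_nonneg_left (by rw [hM]; exact Finset.le_sup' (fun k => v i k / u k) (Finset.mem_univ k)) (hc i)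
  have hmsum : 0 < ∑ i, c i * m i := by
    obtain ⟨i0, hi0⟩ := hc0
    apply Finset.sum_pos' (fun i _ => mul_nonneg (hc i) (hmpos i).le)
    exact ⟨i0, Finset.mem_univ i0, mul_pos hi0 (hmpos i0)⟩
  rw [dH_eq_sup' hN]
  set f : Fin N → ℝ := fun k => (∑ i, c i * v i k) / u k with hf
  have hsupf : (Finset.univ.sup' neN f) ≤ ∑ i, c i * M i :=
    Finset.sup'_le _ _ fun k _ => hhigh k
  have hinff : (∑ i, c i * m i) ≤ Finset.univ.inf' neN f :=
    Finset.le_inf' _ _ fun k _ => hlow k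
  have hinfpos : 0 < Finset.univ.inf' neN f := lt_of_lt_of_le hmsum hinff
  have hbound : (Finset.univ.sup' neN f) / (Finset.univ.inf' neN f) ≤ Real.exp D := by
    rw [div_le_iff₀ hinfpos]
    calc Finset.univ.sup' neN f ≤ ∑ i, c i * M i := hsupf
      _ ≤ ∑ i, c i * (Real.exp D * m i) :=
          Finset.sum_le_sum fun i _ => mul_le_mul_of_nonneg_left (hMm i) (hc i)
      _ = Real.exp D * ∑ i, c i * m i := by rw [Finset.mul_sum]; congr 1; ext i; ring
      _ ≤ Real.exp D * Finset.univ.inf' neN f :=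
          mul_le_mul_of_nonneg_left hinff (Real.exp_pos D).le
  calc Real.log ((Finset.univ.sup' neN f) / (Finset.univ.inf' neN f))
      ≤ Real.log (Real.exp D) := by
        apply Real.log_le_log _ hbound
        apply div_pos _ hinfpos
        obtain ⟨k, _, hk⟩ := Finset.exists_mem_eq_sup' neN f
        rw [hk, hf]
        exact div_pos (Finset.sum_pos' (fun i _ => mul_nonneg (hc i) (hv i k).le)
          (hc0.imp fun i hi => ⟨Finset.mem_univ i, mul_pos hi (hv i k)⟩)) (hu k)
    _ = D := Real.log_exp D


/-- Hilbert-distance contraction of one linear layer `F(X) = A X W` towards the dominant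
eigenvector `u`: `max_j d_H((A X W)_{:,j}, u) ≤ β_C · max_i d_H(X_{:,i}, u)`. -/
theorem stmt17 {N d : ℕ} (hN : 0 < N) (hd : 0 < d)
    (A : Matrix (Fin N) (Fin N) ℝ) (hA : ∀ i j, 0 ≤ A i j)
    (u : Fin N → ℝ) (hu : ∀ i, 0 < u i)
    (heig : ∃ lam : ℝ, 0 < lam ∧ A.mulVec u = lam • u)
    (hApos : ∀ x : Fin N → ℝ, (∀ i, 0 < x i) → ∀ i, 0 < A.mulVec x i)
    (X : Matrix (Fin N) (Fin d) ℝ) (hX : ∀ i j, 0 < X i j)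
    (W : Matrix (Fin d) (Fin d) ℝ) (hW : ∀ i j, 0 ≤ W i j)
    (hWcol : ∀ j, ∃ i, 0 < W i j)
    (β : ℝ) (hβ : β < 1)
    (hcontr : ∀ x : Fin N → ℝ, (∀ i, 0 < x i) →
      dH x u ≤ (Finset.univ.sup' (Finset.univ_nonempty_iff.mpr (Fin.pos_iff_nonempty.mp hd))
        fun i => dH (fun k => X k i) u) →
      dH (A.mulVec x) u ≤ β * dH x u) :
    (Finset.univ.sup' (Finset.univ_nonempty_iff.mpr (Fin.pos_iff_nonempty.mp hd))
        fun j => dH (fun k => (A * X * W) k j) u) ≤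
      β * (Finset.univ.sup' (Finset.univ_nonempty_iff.mpr (Fin.pos_iff_nonempty.mp hd))
        fun i => dH (fun k => X k i) u) := by
  set ned := (Finset.univ_nonempty_iff.mpr (Fin.pos_iff_nonempty.mp hd))
  set C := Finset.univ.sup' ned fun i => dH (fun k => X k i) u with hC
  -- each column of X is positive
  have hXcolpos : ∀ i, ∀ k, (0:ℝ) < X k i := fun i k => hX k i
  have hAXpos : ∀ i k, 0 < A.mulVec (fun k => X k i) k :=
    fun i => hApos _ (hXcolpos i)
  have hdHle : ∀ i, dH (A.mulVec (fun k => X k i)) u ≤ β * dH (fun k => X k i) u :=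
    fun i => hcontr _ (hXcolpos i) (by rw [hC]; exact Finset.le_sup' (fun i => dH (fun k => X k i) u) (Finset.mem_univ i))
  -- β * C ≥ each β * dH(X_i, u)  — handle sign of β via C ≥ 0, and case β < 0
  have hCnonneg : 0 ≤ C := by
    obtain ⟨i, _, hi⟩ := Finset.exists_mem_eq_sup' ned fun i => dH (fun k => X k i) u
    rw [hC, hi]
    exact dH_nonneg hN _ _ (hXcolpos i) hu
  have hstep : ∀ i, dH (A.mulVec (fun k => X k i)) u ≤ β * C := by
    intro i
    rcases le_or_gt 0 β with hb | hb
    · exact le_trans (hdHle i)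
        (mul_le_mul_of_nonneg_left (by rw [hC]; exact Finset.le_sup' (fun i => dH (fun k => X k i) u) (Finset.mem_univ i)) hb)
    · -- β < 0 : show C = 0
      obtain ⟨i0, _, hi0⟩ := Finset.exists_mem_eq_sup' ned fun i => dH (fun k => X k i) u
      have h1 : 0 ≤ dH (A.mulVec (fun k => X k i0)) u :=
        dH_nonneg hN _ _ (hAXpos i0) hu
      have h2 := hdHle i0
      rw [← hi0, ← hC] at h2
      have hC0 : C = 0 := by nlinarith
      have hXi0 : dH (fun k => X k i) u = 0 := by
        have h3 : dH (fun k => X k i) u ≤ C := by rw [hC]; exact Finset.le_sup' (fun i => dH (fun k => X k i) u) (Finset.mem_univ i)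
        have h4 := dH_nonneg hN (fun k => X k i) u (hXcolpos i) hu
        linarith
      have := hdHle i
      rw [hXi0] at this
      simpa [hC0] using this
  apply Finset.sup'_le
  intro j _
  -- column j of A*X*W as a combination
  have hcol : (fun k => (A * X * W) k j) =
      fun k => ∑ i, W i j * A.mulVec (fun k' => X k' i) k := by
    funext k
    simp only [Matrix.mul_apply, Matrix.mulVec, dotProduct]
    exact Finset.sum_congr rfl fun i _ => mul_comm _ _
  rw [hcol]
  exact dH_sum_le hN hd u hu _ hAXpos _ (fun i => hW i j) (hWcol j) _ hstep
end
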